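/- Let Block : ℝ^{n×d} → ℝ^{n×d} be a transformer block without layer normalization with skip connections around both its attention and MLP sublayers: Block(X) = Y + φ(Y·W_up)·W_down where Y = X + S_c(X, W_Q, W_K, W_V)·W_O, and suppose W_Q ∈ GL(d). Set Θ = W_Q, W̃_K = Θ⁻¹W_K, W̃_V = Θ⁻¹W_V, W̃_O = W_O·Θ, W̃_up = Θ⁻¹W_up, W̃_down = W_down·Θ, and let B̃ be the block with the same form built from query weight I_d and these weights. Then Block(X)·Θ = B̃(X·Θ) for all X ∈ ℝ^{n×d}; that is, Block is conjugate (by right multiplication by Θ) to a block whose query weight is the identity. -/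

import Mathlib

/-!
Right multiplication of the residual stream by an invertible `Θ` is a change of basis: the
attention and the MLP read the stream only through products `X * W`, which are unchanged when
`X` becomes `X * Θ` and every reading weight `W` becomes `Θ⁻¹ * W`, while every weight writing
into the stream picks up a factor `Θ` on the right. Taking `Θ = W_Q` turns the query weight
into `Θ⁻¹ * W_Q = 1`.
-/

open scoped Matrix

/-- Causal softmax: `CS(A)_{pq} = exp(A_{pq}) / Σ_{r ≤ p} exp(A_{pr})` if `q ≤ p`, else `0`. -/
noncomputable def causalSoftmax {n : ℕ} (A : Matrix (Fin n) (Fin n) ℝ) :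
    Matrix (Fin n) (Fin n) ℝ :=
  Matrix.of fun p q =>
    if q ≤ p then
      Real.exp (A p q) / ∑ r ∈ Finset.univ.filter (fun r => r ≤ p), Real.exp (A p r)
    else 0

/-- The `i`-th block of `d_k` consecutive columns (columns are indexed by `Fin h × Fin d_k`). -/
def blockCol {n h dk : ℕ} (i : Fin h) (M : Matrix (Fin n) (Fin h × Fin dk) ℝ) :
    Matrix (Fin n) (Fin dk) ℝ :=
  Matrix.of fun p j => M p (i, j)

/-- Multi-head causal self-attention: per head `i`,
`CS((1/√d_k)(XW_Q)_i (XW_K)_iᵀ) (XW_V)_i`, concatenated over heads. -/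
noncomputable def Sc {n h dk : ℕ} (X : Matrix (Fin n) (Fin h × Fin dk) ℝ)
    (WQ WK WV : Matrix (Fin h × Fin dk) (Fin h × Fin dk) ℝ) :
    Matrix (Fin n) (Fin h × Fin dk) ℝ :=
  Matrix.of fun p c =>
    (causalSoftmax ((1 / Real.sqrt dk) •
        (blockCol c.1 (X * WQ) * (blockCol c.1 (X * WK))ᵀ)) *
      blockCol c.1 (X * WV)) p c.2


/-- A transformer block without layer normalization, with skip connections around both the
attention and the MLP: `Block(X) = Y + φ(Y · W_up) · W_down` where
`Y = X + S_c(X, W_Q, W_K, W_V) · W_O`. -/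
noncomputable def blockFn {n h dk m : ℕ} (φ : ℝ → ℝ)
    (WQ WK WV WO : Matrix (Fin h × Fin dk) (Fin h × Fin dk) ℝ)
    (Wup : Matrix (Fin h × Fin dk) (Fin m) ℝ)
    (Wdown : Matrix (Fin m) (Fin h × Fin dk) ℝ)
    (X : Matrix (Fin n) (Fin h × Fin dk) ℝ) : Matrix (Fin n) (Fin h × Fin dk) ℝ :=
  let Y := X + Sc X WQ WK WV * WO
  Y + ((Y * Wup).map φ) * Wdown

theorem Matrix.mul_mul_nonsing_inv_mul_cancel {l m n α : Type*} [Fintype m] [DecidableEq m]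
    [CommRing α] (X : Matrix l m α) {Θ : Matrix m m α} (hΘ : IsUnit Θ.det) (W : Matrix m n α) :
    X * Θ * (Θ⁻¹ * W) = X * W := by
  rw [Matrix.mul_assoc, Matrix.mul_nonsing_inv_cancel_left Θ W hΘ]

section ChangeOfBasis

variable {n h dk m : ℕ} {Θ : Matrix (Fin h × Fin dk) (Fin h × Fin dk) ℝ}

theorem Sc_mul_right (hΘ : IsUnit Θ.det) (X : Matrix (Fin n) (Fin h × Fin dk) ℝ)
    (WQ WK WV : Matrix (Fin h × Fin dk) (Fin h × Fin dk) ℝ) :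
    Sc (X * Θ) (Θ⁻¹ * WQ) (Θ⁻¹ * WK) (Θ⁻¹ * WV) = Sc X WQ WK WV := by
  simp only [Sc, Matrix.mul_mul_nonsing_inv_mul_cancel X hΘ]

theorem blockFn_mul_right (hΘ : IsUnit Θ.det) (φ : ℝ → ℝ)
    (WQ WK WV WO : Matrix (Fin h × Fin dk) (Fin h × Fin dk) ℝ)
    (Wup : Matrix (Fin h × Fin dk) (Fin m) ℝ) (Wdown : Matrix (Fin m) (Fin h × Fin dk) ℝ)
    (X : Matrix (Fin n) (Fin h × Fin dk) ℝ) :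
    blockFn φ WQ WK WV WO Wup Wdown X * Θ =
      blockFn φ (Θ⁻¹ * WQ) (Θ⁻¹ * WK) (Θ⁻¹ * WV) (WO * Θ) (Θ⁻¹ * Wup) (Wdown * Θ) (X * Θ) := by
  have hY : (X + Sc X WQ WK WV * WO) * Θ =
      X * Θ + Sc (X * Θ) (Θ⁻¹ * WQ) (Θ⁻¹ * WK) (Θ⁻¹ * WV) * (WO * Θ) := by
    rw [Sc_mul_right hΘ, Matrix.add_mul, Matrix.mul_assoc]
  simp only [blockFn]
  rw [← hY, Matrix.mul_mul_nonsing_inv_mul_cancel _ hΘ, Matrix.add_mul, Matrix.mul_assoc]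

end ChangeOfBasis

/-- **Blocks are conjugate to reduced blocks.** With `Θ = W_Q`,
`Block(X) · Θ = B̃(X · Θ)` where `B̃` is the block with query weight `I` and weights
`W̃_K = Θ⁻¹W_K`, `W̃_V = Θ⁻¹W_V`, `W̃_O = W_O Θ`, `W̃_up = Θ⁻¹W_up`, `W̃_down = W_down Θ`. -/
theorem block_conjugate_to_reduced {n h dk m : ℕ} (φ : ℝ → ℝ)
    (WQ WK WV WO : Matrix (Fin h × Fin dk) (Fin h × Fin dk) ℝ)
    (Wup : Matrix (Fin h × Fin dk) (Fin m) ℝ)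
    (Wdown : Matrix (Fin m) (Fin h × Fin dk) ℝ)
    (hWQ : IsUnit WQ.det) :
    ∀ X : Matrix (Fin n) (Fin h × Fin dk) ℝ,
      blockFn φ WQ WK WV WO Wup Wdown X * WQ =
        blockFn φ (1 : Matrix (Fin h × Fin dk) (Fin h × Fin dk) ℝ)
          (WQ⁻¹ * WK) (WQ⁻¹ * WV) (WO * WQ) (WQ⁻¹ * Wup) (Wdown * WQ) (X * WQ) := by
  intro X
  rw [blockFn_mul_right hWQ, Matrix.nonsing_inv_mul WQ hWQ]
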